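/- Let U be an ultrafilter on a set X. The ultrapower Ult(Ord, U) (equivalently, the membership relation of Ult(V, U) restricted to classes of ordinal-valued functions) is well-founded if and only if U is countably complete. -/

import Mathlib

/-- An ultrafilter is countably complete if it is closed under countable intersections. -/
def CountablyComplete {X : Type*} (U : Ultrafilter X) : Prop :=
  ∀ A : ℕ → Set X, (∀ n, A n ∈ U) → (⋂ n, A n) ∈ U

/-!
A descending sequence `f 0 > f 1 > ⋯` in the ultrapower descends pointwise on the sets
`{x | f (n + 1) x < f n x} ∈ U`; if `U` is countably complete these sets have a common point,
which yields a descending sequence of ordinals. Conversely, if `A n ∈ U` but `⋂ n, A n ∉ U`,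
then `φ x = min {m | x ∉ A m}` is a `U`-unbounded function `X → ℕ`, and `φ - n` descends
in the ultrapower.
-/

open Filter

theorem CountablyComplete.countableInterFilter {X : Type*} {U : Ultrafilter X}
    (hU : CountablyComplete U) : CountableInterFilter (U : Filter X) where
  countable_sInter_mem S hS hSU := by
    rcases S.eq_empty_or_nonempty with rfl | hne
    · simp
    obtain ⟨A, rfl⟩ := hS.exists_eq_range hne
    rw [Set.sInter_range]
    exact hU A fun n => hSU _ (Set.mem_range_self n)

section EventuallyRel

variable {X β : Type*} {l : Filter X} {r : β → β → Prop}

theorem wellFounded_eventually_rel [CountableInterFilter l] [l.NeBot] (hr : WellFounded r) :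
    WellFounded (fun f g : X → β => ∀ᶠ x in l, r (f x) (g x)) := by
  refine wellFounded_iff_isEmpty_descending_chain.2 ⟨fun ⟨f, hf⟩ => ?_⟩
  obtain ⟨x, hx⟩ := (eventually_countable_forall.2 hf).exists
  exact (wellFounded_iff_isEmpty_descending_chain.1 hr).false ⟨(f · x), hx⟩

theorem not_wellFounded_eventually_rel_of_tendsto {φ : X → ℕ} (hφ : Tendsto φ l atTop)
    {e : ℕ → β} (he : ∀ k, r (e k) (e (k + 1))) :
    ¬ WellFounded (fun f g : X → β => ∀ᶠ x in l, r (f x) (g x)) := by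
  refine fun hwf => (wellFounded_iff_isEmpty_descending_chain.1 hwf).false
    ⟨fun n x => e (φ x - n), fun n => ?_⟩
  filter_upwards [tendsto_atTop.1 hφ (n + 1)] with x hx
  have : φ x - n = φ x - (n + 1) + 1 := by omega
  simpa only [this] using he (φ x - (n + 1))

end EventuallyRel

theorem tendsto_sInf_notMem_atTop {X : Type*} {l : Filter X} {A : ℕ → Set X}
    (hA : ∀ n, A n ∈ l) (hI : (⋂ n, A n)ᶜ ∈ l) :
    Tendsto (fun x => sInf {m | x ∉ A m}) l atTop := by
  refine tendsto_atTop.2 fun n => ?_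
  have hbelow : ∀ᶠ x in l, ∀ k ∈ Set.Iio n, x ∈ A k :=
    (eventually_all_finite (Set.finite_Iio n)).2 fun k _ => hA k
  filter_upwards [hbelow, hI] with x hx hxI
  obtain ⟨m, hm⟩ : ∃ m, x ∉ A m := by simpa using hxI
  exact le_csInf ⟨m, hm⟩ fun k hk => not_lt.1 fun hkn => hk (hx k hkn)

/-- For an ultrafilter `U` on a set `X`, the ultrapower
`Ult(Ord, U)` — i.e. the relation `[f]_U < [g]_U` iff `{x | f x < g x} ∈ U` on
(representatives of) classes of ordinal-valued functions — is well-founded if and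
only if `U` is countably complete. -/
theorem stmt_2 {X : Type*} (U : Ultrafilter X) :
    WellFounded (fun f g : X → Ordinal => {x | f x < g x} ∈ U) ↔
      CountablyComplete U := by
  constructor
  · intro hwf
    by_contra hU
    obtain ⟨A, hA, hI⟩ : ∃ A : ℕ → Set X, (∀ n, A n ∈ U) ∧ (⋂ n, A n) ∉ U := by
      simpa [CountablyComplete] using hU
    exact not_wellFounded_eventually_rel_of_tendsto
      (tendsto_sInf_notMem_atTop hA (Ultrafilter.compl_mem_iff_notMem.2 hI))
      (e := ((↑) : ℕ → Ordinal)) (fun k => by exact_mod_cast Nat.lt_succ_self k) hwf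
  · intro hU
    have := hU.countableInterFilter
    exact wellFounded_eventually_rel Ordinal.lt_wf
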